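/- arXiv:2508.14989 — 2 statements merged into one kernel-verified Lean document; each statement's English description precedes it below -/
import Mathlib

section
/- Let P : ℝᵖ → ℝ be convex and continuously differentiable, ε > 0, and let θ̂ ∈ ℝᵖ satisfy 0 ≤ P(θ̂) ≤ ε and ∇P(θ̂) ≠ 0. Let θ* ∈ ℝᵖ satisfy P(θ*) ≤ 0. Then for every m ∈ ℝᵖ, ⟨θ* − θ̂, proj(m) − m⟩ ≥ 0; equivalently ⟨θ* − θ̂, proj(m)⟩ ≥ ⟨θ* − θ̂, m⟩. -/
open scoped RealInnerProductSpace

/-! By the first-order characterisation of convexity, `⟪∇P θ̂, θ* - θ̂⟫ ≤ P θ* - P θ̂ ≤ 0`.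
When the projection is active, `proj m - m` is a nonnegative multiple of `-∇P θ̂`, so its
inner product with `θ* - θ̂` is nonnegative. -/

noncomputable def projOp {p : ℕ} (gradP : EuclideanSpace ℝ (Fin p)) (h : ℝ)
    (m : EuclideanSpace ℝ (Fin p)) : EuclideanSpace ℝ (Fin p) :=
  if ⟪gradP, m⟫ ≤ 0 then m
  else m - (h * (⟪gradP, m⟫ / ‖gradP‖^2)) • gradP

open AffineMap in
theorem ConvexOn.le_sub_of_hasFDerivAt {E : Type*} [NormedAddCommGroup E] [NormedSpace ℝ E]
    {s : Set E} {f : E → ℝ} {f' : E →L[ℝ] ℝ} {x y : E} (hf : ConvexOn ℝ s f)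
    (hx : x ∈ s) (hy : y ∈ s) (hf' : HasFDerivAt f f' x) :
    f' (y - x) ≤ f y - f x := by
  let ℓ : ℝ →ᵃ[ℝ] E := lineMap x y
  have hline : ConvexOn ℝ (ℓ ⁻¹' s) (f ∘ ℓ) := hf.comp_affineMap ℓ
  have hderiv : HasDerivAt (f ∘ ℓ) (f' (y - x)) 0 :=
    (by simpa [ℓ] using hf' : HasFDerivAt f f' (ℓ 0)).comp_hasDerivAt 0 hasDerivAt_lineMap
  simpa [ℓ, slope_def_field] using
    hline.le_slope_of_hasDerivAt (by simpa [ℓ] using hx) (by simpa [ℓ] using hy) one_pos hderiv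

theorem ConvexOn.inner_le_sub_of_hasGradientAt {F : Type*} [NormedAddCommGroup F]
    [InnerProductSpace ℝ F] [CompleteSpace F] {s : Set F} {f : F → ℝ} {g x y : F}
    (hf : ConvexOn ℝ s f) (hx : x ∈ s) (hy : y ∈ s) (hg : HasGradientAt f g x) :
    ⟪g, y - x⟫ ≤ f y - f x :=
  hf.le_sub_of_hasFDerivAt hx hy hg.hasFDerivAt

theorem inner_projOp_sub_self_nonneg {p : ℕ} {g v : EuclideanSpace ℝ (Fin p)} {h : ℝ}
    (hgv : ⟪g, v⟫ ≤ 0) (hh : 0 ≤ h) (m : EuclideanSpace ℝ (Fin p)) :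
    0 ≤ ⟪v, projOp g h m - m⟫ := by
  unfold projOp
  split_ifs with hgm
  · simp
  · have hcoef : 0 ≤ h * (⟪g, m⟫ / ‖g‖ ^ 2) :=
      mul_nonneg hh (div_nonneg (not_le.mp hgm).le (sq_nonneg _))
    rw [sub_sub_cancel_left, inner_neg_right, real_inner_smul_right, real_inner_comm g v]
    nlinarith

theorem proj_estimation_error_property_general
    (p : ℕ) (P : EuclideanSpace ℝ (Fin p) → ℝ)
    (hP : ContDiff ℝ 1 P) (hP_conv : ConvexOn ℝ Set.univ P)
    (ε : ℝ) (hε : 0 < ε)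
    (θhat : EuclideanSpace ℝ (Fin p))
    (hθhat₀ : 0 ≤ P θhat)
    (θstar : EuclideanSpace ℝ (Fin p)) (hθstar : P θstar ≤ 0)
    (m : EuclideanSpace ℝ (Fin p)) :
    ⟪θstar - θhat, projOp (gradient P θhat) (min 1 (P θhat / ε)) m - m⟫ ≥ 0 := by
  have hgrad : HasGradientAt P (gradient P θhat) θhat :=
    (hP.differentiable one_ne_zero θhat).hasGradientAt
  have hdescent : ⟪gradient P θhat, θstar - θhat⟫ ≤ 0 :=
    (hP_conv.inner_le_sub_of_hasGradientAt trivial trivial hgrad).trans (by linarith)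
  exact inner_projOp_sub_self_nonneg hdescent
    (le_min zero_le_one (div_nonneg hθhat₀ hε.le)) m

theorem proj_estimation_error_property
    (p : ℕ) (P : EuclideanSpace ℝ (Fin p) → ℝ)
    (hP : ContDiff ℝ 1 P) (hP_conv : ConvexOn ℝ Set.univ P)
    (ε : ℝ) (hε : 0 < ε)
    (θhat : EuclideanSpace ℝ (Fin p))
    (hθhat₀ : 0 ≤ P θhat) (hθhatε : P θhat ≤ ε)
    (hgrad : gradient P θhat ≠ 0)
    (θstar : EuclideanSpace ℝ (Fin p)) (hθstar : P θstar ≤ 0)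
    (m : EuclideanSpace ℝ (Fin p)) :
    ⟪θstar - θhat, projOp (gradient P θhat) (min 1 (P θhat / ε)) m - m⟫ ≥ 0 :=
  proj_estimation_error_property_general p P hP hP_conv ε hε θhat hθhat₀ θstar hθstar m
end

section
/- Let n, p ∈ ℕ, let k_e, γ, k_T, σ, θ̄, ε̄ > 0 and c₀, c₁, c₂ ≥ 0, and let ρ₁ : [0,∞) → [0,∞) be nondecreasing with ρ(s) := ρ₁(s)·s. Define b₀ := min(k_e/2 − γc₂(p+1)k_T θ̄ − (1/2)γ(c₁θ̄ + c₀)θ̄(p+1)k_T, σ/2) and b₁ := ε̄²/(2k_e) + (1/2)γ(c₁θ̄ + c₀)θ̄(p+1)k_T + (1/2)σθ̄². Let e ∈ ℝⁿ, θ̂, θ* ∈ ℝᵖ with ‖θ̂‖ ≤ θ̄ and ‖θ*‖ ≤ θ̄, set θ̃ := θ* − θ̂ and ‖z‖ := √(‖e‖² + ‖θ̃‖²), let J : ℝᵖ → ℝⁿ be a linear map with operator norm ‖J‖ ≤ c₂‖e‖ + c₁‖θ̂‖ + c₀, and let Δ ∈ ℝⁿ satisfy ‖Δ‖ ≤ ε̄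 + ρ₁(‖z‖)‖z‖². Then W := ⟨e, −k_e·e + Δ⟩ − ⟨θ̃, (1/2)(p+1)γk_T·Jᵀe − σθ̂⟩ ≤ −(b₀ − ρ(‖z‖))·‖z‖² + b₁, where Jᵀ denotes the adjoint of J. -/
set_option maxHeartbeats 1600000


open scoped RealInnerProductSpace

theorem generator_deterministic_core_bound
    (n p : ℕ) (k_e γ k_T σ θbar εbar : ℝ)
    (hk_e : 0 < k_e) (hγ : 0 < γ) (hk_T : 0 < k_T) (hσ : 0 < σ)
    (hθbar : 0 < θbar) (hεbar : 0 < εbar)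
    (c₀ c₁ c₂ : ℝ) (hc₀ : 0 ≤ c₀) (hc₁ : 0 ≤ c₁) (hc₂ : 0 ≤ c₂)
    (ρ₁ : ℝ → ℝ) (hρ₁_nonneg : ∀ s, 0 ≤ s → 0 ≤ ρ₁ s)
    (hρ₁_mono : ∀ s t, 0 ≤ s → s ≤ t → ρ₁ s ≤ ρ₁ t)
    (ρ : ℝ → ℝ) (hρ : ∀ s, ρ s = ρ₁ s * s)
    (b₀ b₁ : ℝ)
    (hb₀ : b₀ = min (k_e/2 - γ*c₂*(p+1)*k_T*θbar
        - (1/2)*γ*(c₁*θbar + c₀)*θbar*(p+1)*k_T) (σ/2))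
    (hb₁ : b₁ = εbar^2/(2*k_e) + (1/2)*γ*(c₁*θbar + c₀)*θbar*(p+1)*k_T
        + (1/2)*σ*θbar^2)
    (e Δ : EuclideanSpace ℝ (Fin n)) (θhat θstar : EuclideanSpace ℝ (Fin p))
    (hθhat : ‖θhat‖ ≤ θbar) (hθstar : ‖θstar‖ ≤ θbar)
    (θt : EuclideanSpace ℝ (Fin p)) (hθt : θt = θstar - θhat)
    (z : ℝ) (hz : z = Real.sqrt (‖e‖^2 + ‖θt‖^2))
    (J : EuclideanSpace ℝ (Fin p) →L[ℝ] EuclideanSpace ℝ (Fin n))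
    (hJ : ‖J‖ ≤ c₂*‖e‖ + c₁*‖θhat‖ + c₀)
    (hΔ : ‖Δ‖ ≤ εbar + ρ₁ z * z^2)
    (W : ℝ)
    (hW : W = ⟪e, -k_e • e + Δ⟫
        - ⟪θt, ((1/2)*(p+1)*γ*k_T) • (ContinuousLinearMap.adjoint J) e - σ • θhat⟫) :
    W ≤ -(b₀ - ρ z) * z^2 + b₁ := by
  set E := ‖e‖ with hE
  set T := ‖θt‖ with hT
  have hEnn : 0 ≤ E := norm_nonneg _
  have hTnn : 0 ≤ T := norm_nonneg _
  set c : ℝ := (1/2)*(p+1)*γ*k_T with hc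
  have hcnn : 0 ≤ c := by
    have : (0:ℝ) ≤ (p:ℝ) + 1 := by positivity
    positivity
  -- z facts
  have hznn : 0 ≤ z := hz ▸ Real.sqrt_nonneg _
  have hz2 : z^2 = E^2 + T^2 := by
    rw [hz, Real.sq_sqrt (by positivity)]
  have hEz : E ≤ z := by
    nlinarith [sq_nonneg T, sq_nonneg (z - E)]
  -- inner product expansion
  have hip1 : ⟪e, -k_e • e + Δ⟫ = -k_e * E^2 + ⟪e, Δ⟫ := by
    rw [inner_add_right, inner_smul_right, real_inner_self_eq_norm_sq]
  have hip2 : ⟪θt, c • (ContinuousLinearMap.adjoint J) e - σ • θhat⟫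
      = c * ⟪θt, (ContinuousLinearMap.adjoint J) e⟫ - σ * ⟪θt, θhat⟫ := by
    rw [inner_sub_right, inner_smul_right, inner_smul_right]
  -- bound inner e Δ
  have hΔnn : ⟪e, Δ⟫ ≤ E * (εbar + ρ₁ z * z^2) := by
    calc ⟪e, Δ⟫ ≤ E * ‖Δ‖ := real_inner_le_norm e Δ
    _ ≤ E * (εbar + ρ₁ z * z^2) := by
        exact mul_le_mul_of_nonneg_left hΔ hEnn
  -- bound cross term
  have hJbd : ‖J‖ ≤ c₂*E + c₁*θbar + c₀ := by
    refine hJ.trans ?_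
    have := mul_le_mul_of_nonneg_left hθhat hc₁
    linarith
  have hJnn : (0:ℝ) ≤ c₂*E + c₁*θbar + c₀ := by positivity
  have hcross : -(c * ⟪θt, (ContinuousLinearMap.adjoint J) e⟫)
      ≤ c * (T * ((c₂*E + c₁*θbar + c₀) * E)) := by
    have h1 : |⟪θt, (ContinuousLinearMap.adjoint J) e⟫| ≤ T * ((c₂*E + c₁*θbar + c₀) * E) := by
      rw [ContinuousLinearMap.adjoint_inner_right]
      calc |⟪J θt, e⟫| ≤ ‖J θt‖ * E := abs_real_inner_le_norm _ _
      _ ≤ (‖J‖ * T) * E := mul_le_mul_of_nonneg_right (J.le_opNorm θt) hEnn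
      _ ≤ T * ((c₂*E + c₁*θbar + c₀) * E) := by nlinarith [mul_nonneg (mul_nonneg (sub_nonneg.2 hJbd) hTnn) hEnn]
    have h3 : -(⟪θt, (ContinuousLinearMap.adjoint J) e⟫) ≤ T * ((c₂*E + c₁*θbar + c₀) * E) :=
      (neg_le_abs _).trans h1
    calc -(c * ⟪θt, (ContinuousLinearMap.adjoint J) e⟫)
        = c * (-(⟪θt, (ContinuousLinearMap.adjoint J) e⟫)) := by ring
    _ ≤ c * (T * ((c₂*E + c₁*θbar + c₀) * E)) := mul_le_mul_of_nonneg_left h3 hcnn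
  -- bound σ term
  have hθhat_eq : θhat = θstar - θt := by rw [hθt]; abel
  have hsig : σ * ⟪θt, θhat⟫ ≤ σ * (T * θbar - T^2) := by
    have h1 : ⟪θt, θhat⟫ = ⟪θt, θstar⟫ - T^2 := by
      rw [hθhat_eq, inner_sub_right, real_inner_self_eq_norm_sq]
    have h2 : ⟪θt, θstar⟫ ≤ T * θbar := by
      calc ⟪θt, θstar⟫ ≤ T * ‖θstar‖ := real_inner_le_norm _ _
      _ ≤ T * θbar := mul_le_mul_of_nonneg_left hθstar hTnn
    have : ⟪θt, θhat⟫ ≤ T * θbar - T^2 := by rw [h1]; linarith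
    exact mul_le_mul_of_nonneg_left this hσ.le
  -- combine
  have hWbd : W ≤ -k_e * E^2 + E * (εbar + ρ₁ z * z^2)
      + c * (T * ((c₂*E + c₁*θbar + c₀) * E)) + σ * (T * θbar - T^2) := by
    rw [hW, hip1, hip2]
    linarith
  -- real arithmetic
  have hT2 : T ≤ 2 * θbar := by
    rw [hT, hθt]
    calc ‖θstar - θhat‖ ≤ ‖θstar‖ + ‖θhat‖ := norm_sub_le _ _
    _ ≤ 2 * θbar := by linarith
  have hρznn : 0 ≤ ρ₁ z := hρ₁_nonneg z hznn
  have hρzz : ρ z = ρ₁ z * z := hρ z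
  have hb0a : b₀ ≤ k_e/2 - γ*c₂*(p+1)*k_T*θbar
      - (1/2)*γ*(c₁*θbar + c₀)*θbar*(p+1)*k_T := hb₀ ▸ min_le_left _ _
  have hb0b : b₀ ≤ σ/2 := hb₀ ▸ min_le_right _ _
  clear hW hip1 hip2 hΔnn hcross hsig hθhat_eq hΔ hJ hJbd hz hθhat hθstar hθt hρ₁_nonneg hρ₁_mono hρ hb₀ hJnn hE hT
  clear_value E T c
  clear e Δ θhat θstar θt J
  -- key Young inequalities
  have hy1 : E * εbar ≤ k_e/2 * E^2 + εbar^2/(2*k_e) := by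
    have h : E * εbar - k_e/2 * E^2 ≤ εbar^2/(2*k_e) := by
      rw [le_div_iff₀ (by positivity : (0:ℝ) < 2*k_e)]
      nlinarith only [sq_nonneg (k_e * E - εbar), hk_e]
    linarith
  have hK : 0 ≤ c₁*θbar + c₀ := by positivity
  have h1 : 0 ≤ c * c₂ * (E^2 * (2*θbar - T)) :=
    mul_nonneg (mul_nonneg hcnn hc₂) (mul_nonneg (sq_nonneg E) (sub_nonneg.2 hT2))
  have h2 : 0 ≤ c * (c₁*θbar + c₀) * (E * (2*θbar - T)) :=
    mul_nonneg (mul_nonneg hcnn hK) (mul_nonneg hEnn (sub_nonneg.2 hT2))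
  have h3 : 0 ≤ c * (c₁*θbar + c₀) * (θbar * (E-1)^2) :=
    mul_nonneg (mul_nonneg hcnn hK) (mul_nonneg hθbar.le (sq_nonneg (E-1)))
  have hct : c * (T * ((c₂*E + c₁*θbar + c₀) * E))
      ≤ 2*c*θbar*c₂*E^2 + c*θbar*(c₁*θbar+c₀)*(E^2+1) := by nlinarith only [h1, h2, h3]
  rw [hc] at hct
  have hsig2 : σ * (T * θbar - T^2) ≤ (1/2)*σ*θbar^2 - (σ/2)*T^2 := by
    nlinarith only [sq_nonneg (T - θbar), hσ.le]
  have hA : b₀ * E^2 ≤ (k_e/2 - γ*c₂*(↑p+1)*k_T*θbar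
      - (1/2)*γ*(c₁*θbar + c₀)*θbar*(↑p+1)*k_T) * E^2 :=
    mul_le_mul_of_nonneg_right hb0a (sq_nonneg E)
  have hB : b₀ * T^2 ≤ (σ/2) * T^2 := mul_le_mul_of_nonneg_right hb0b (sq_nonneg T)
  have hy2 : E * (ρ₁ z * z^2) ≤ ρ z * z^2 := by
    rw [hρzz]
    have : E * (ρ₁ z * z^2) ≤ z * (ρ₁ z * z^2) :=
      mul_le_mul_of_nonneg_right hEz (by positivity)
    linarith [this]
  rw [hz2] at hWbd hy2 ⊢
  rw [hc] at hWbd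
  rw [hb₁]
  linarith only [hWbd, hy1, hy2, hct, hsig2, hA, hB, hb₁]
end
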